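/- For every P1, P2, Q > 0, 0 < N1 < N2, γ ∈ [0,1], β ∈ [0,1], α ∈ [0,1], and ρ ∈ [0,1] with ρ(1−γ)P1 ≤ Q, the generalized dirty paper coding rate satisfies min{ r1(γ,ρ,β,α), r2(γ,ρ,β,α) } ≤ sup_{β'∈[0,1]} min{ C(β'(1−γ)P1/(γP1+N1)), C(((1−γ)P1+P2+2√((1−β')(1−γ)P1P2))/(γP1+N2)) }; that is, the GDPC inner bound for the D-AWGN PC-RBC with informed source only lies within the outer bound given by the capacity region with state known at both source and relay. -/

import Mathlib

/-!
The generalized dirty paper coding (GDPC) inner bound of the D-AWGN partially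
cooperative relay broadcast channel with informed source only lies within the
outer bound given by the capacity region with state known at both the source and
the relay: a purely analytic inequality between the corresponding rate formulas.
-/

noncomputable section

namespace DAWGN

/-- `C(x) = (1/2)·log₂(1+x)`. -/
def Cfun (x : ℝ) : ℝ := (1 / 2) * Real.logb 2 (1 + x)
/-! ### The generalized dirty paper coding (GDPC) rates -/

/-- `Q'(γ,ρ) = (√Q − √(ρ(1−γ)P₁))²`, the power of the residual state after
partial state cancellation. -/
def Qd (P1 Q γ ρ : ℝ) : ℝ := (Real.sqrt Q - Real.sqrt (ρ * (1 - γ) * P1)) ^ 2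

/-- `A(γ,ρ,β,α)`. -/
def Agdpc (P1 Q N1 γ ρ β α : ℝ) : ℝ :=
  (1 - β ^ 2) * (1 - ρ) * (1 - γ) * P1 *
    ((1 - β ^ 2) * (1 - ρ) * (1 - γ) * P1 + Qd P1 Q γ ρ + γ * P1 + N1)

/-- `B(γ,ρ,β,α)`. -/
def Bgdpc (P1 Q N1 γ ρ β α : ℝ) : ℝ :=
  (1 - α) ^ 2 * (1 - β ^ 2) * (1 - ρ) * (1 - γ) * P1 * Qd P1 Q γ ρ +
    (N1 + γ * P1) * ((1 - β ^ 2) * (1 - ρ) * (1 - γ) * P1 + α ^ 2 * Qd P1 Q γ ρ)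

/-- `C(γ,ρ,β,α)`. -/
def Cgdpc (P1 P2 Q N2 γ ρ β α : ℝ) : ℝ :=
  (1 - β ^ 2) * (1 - ρ) * (1 - γ) * P1 *
    ((1 - ρ) * (1 - γ) * P1 + P2 + Qd P1 Q γ ρ +
      2 * β * Real.sqrt ((1 - ρ) * (1 - γ) * P1 * P2) + γ * P1 + N2)

/-- `D(γ,ρ,β,α)`. -/
def Dgdpc (P1 P2 Q N2 γ ρ β α : ℝ) : ℝ :=
  (1 - α) ^ 2 * (1 - β ^ 2) * (1 - ρ) * (1 - γ) * P1 * Qd P1 Q γ ρ +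
    (N2 + γ * P1) * ((1 - β ^ 2) * (1 - ρ) * (1 - γ) * P1 + α ^ 2 * Qd P1 Q γ ρ)

/-- `r₁(γ,ρ,β,α) = (1/2)·log₂(A/B)`. -/
def r1 (P1 Q N1 γ ρ β α : ℝ) : ℝ :=
  (1 / 2) * Real.logb 2 (Agdpc P1 Q N1 γ ρ β α / Bgdpc P1 Q N1 γ ρ β α)

/-- `r₂(γ,ρ,β,α) = (1/2)·log₂(C/D)`. -/
def r2 (P1 P2 Q N2 γ ρ β α : ℝ) : ℝ :=
  (1 / 2) * Real.logb 2 (Cgdpc P1 P2 Q N2 γ ρ β α / Dgdpc P1 P2 Q N2 γ ρ β α)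

/-!
Write `s = (1−β²)(1−ρ)(1−γ)P₁` and `n = γP₁ + N`. Both GDPC ratios `A/B` and `C/D` have the form
`s(s+q+n+E) / ((1−α)²sq + n(s+α²q))` with `q = Q'`, where `E = 0` for `A/B` and
`E = β²(1−ρ)(1−γ)P₁ + P₂ + 2β√((1−ρ)(1−γ)P₁P₂) ≥ 0` for `C/D`; moreover
`(n+s+E)·denominator − n·numerator = q(nα − (1−α)s)² + Eq((1−α)²s + nα²) ≥ 0`,
so each ratio is at most `1 + (s+E)/n`, whatever `α` is. Taking `β' = (1−β²)(1−ρ)` this is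
exactly the first outer-bound term for `r₁`; for `r₂` the coherent power `s + E` is at most
`(1−γ)P₁ + P₂ + 2√((1−β')(1−γ)P₁P₂)`, the second outer-bound term at the same `β'`.
-/

open Real Set

def outerRate (P1 P2 N1 N2 γ β' : ℝ) : ℝ :=
  min (Cfun (β' * (1 - γ) * P1 / (γ * P1 + N1)))
    (Cfun (((1 - γ) * P1 + P2 + 2 * √((1 - β') * (1 - γ) * P1 * P2)) / (γ * P1 + N2)))

lemma Cfun_le_Cfun {x y : ℝ} (hx : 0 ≤ x) (hxy : x ≤ y) : Cfun x ≤ Cfun y := by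
  unfold Cfun
  gcongr
  linarith

-- The case `u = 0` covers a vanishing denominator, where `A / 0 = 0` and `logb 2 0 = 0`.
lemma half_logb_le_Cfun {u x : ℝ} (hu : 0 ≤ u) (hx : 0 ≤ x) (hux : u ≤ 1 + x) :
    1 / 2 * logb 2 u ≤ Cfun x := by
  rcases hu.eq_or_lt with rfl | hu
  · have : 0 ≤ logb 2 (1 + x) := logb_nonneg (by norm_num) (by linarith)
    simp only [Cfun, logb_zero]
    linarith
  · unfold Cfun
    gcongr
    norm_num

section GdpcRatio

variable {s q n E : ℝ} (a : ℝ)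

lemma mul_gdpc_num_le_mul_gdpc_den (hs : 0 ≤ s) (hq : 0 ≤ q) (hn : 0 ≤ n) (hE : 0 ≤ E) :
    n * (s * (s + q + n + E)) ≤ (n + s + E) * ((1 - a) ^ 2 * s * q + n * (s + a ^ 2 * q)) := by
  have hdiff : (n + s + E) * ((1 - a) ^ 2 * s * q + n * (s + a ^ 2 * q)) - n * (s * (s + q + n + E))
      = q * (n * a - (1 - a) * s) ^ 2 + E * q * ((1 - a) ^ 2 * s + n * a ^ 2) := by
    ring
  have : 0 ≤ q * (n * a - (1 - a) * s) ^ 2 + E * q * ((1 - a) ^ 2 * s + n * a ^ 2) := by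
    positivity
  linarith

lemma gdpc_ratio_le (hs : 0 ≤ s) (hq : 0 ≤ q) (hn : 0 < n) (hE : 0 ≤ E) :
    s * (s + q + n + E) / ((1 - a) ^ 2 * s * q + n * (s + a ^ 2 * q)) ≤ 1 + (s + E) / n := by
  apply div_le_of_le_mul₀ (by positivity) (by positivity)
  calc s * (s + q + n + E)
      ≤ (n + s + E) * ((1 - a) ^ 2 * s * q + n * (s + a ^ 2 * q)) / n := by
        rw [le_div_iff₀ hn, mul_comm]
        exact mul_gdpc_num_le_mul_gdpc_den a hs hq hn.le hE
    _ = (1 + (s + E) / n) * ((1 - a) ^ 2 * s * q + n * (s + a ^ 2 * q)) := by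
        field_simp
        ring

lemma half_logb_gdpc_ratio_le_Cfun (hs : 0 ≤ s) (hq : 0 ≤ q) (hn : 0 < n) (hE : 0 ≤ E) :
    1 / 2 * logb 2 (s * (s + q + n + E) / ((1 - a) ^ 2 * s * q + n * (s + a ^ 2 * q))) ≤
      Cfun ((s + E) / n) :=
  half_logb_le_Cfun (by positivity) (by positivity) (gdpc_ratio_le a hs hq hn hE)

end GdpcRatio

lemma coherent_power_le {p P ρ β : ℝ} (hp : 0 ≤ p) (hP : 0 ≤ P) (hρ : 0 ≤ ρ) (hβ : 0 ≤ β) :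
    (1 - ρ) * p + P + 2 * β * √((1 - ρ) * p * P) ≤
      p + P + 2 * √((1 - (1 - β ^ 2) * (1 - ρ)) * p * P) := by
  have hβsqrt : β * √((1 - ρ) * p * P) = √(β ^ 2 * ((1 - ρ) * p * P)) := by
    rw [sqrt_mul (sq_nonneg β), sqrt_sq hβ]
  have hrad : β ^ 2 * ((1 - ρ) * p * P) ≤ (1 - (1 - β ^ 2) * (1 - ρ)) * p * P := by
    have : (1 - (1 - β ^ 2) * (1 - ρ)) * p * P - β ^ 2 * ((1 - ρ) * p * P) = ρ * p * P := by ring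
    have : 0 ≤ ρ * p * P := by positivity
    linarith
  have := sqrt_le_sqrt hrad
  have : 0 ≤ ρ * p := mul_nonneg hρ hp
  rw [mul_assoc 2, hβsqrt]
  linarith

lemma Qd_nonneg (P1 Q γ ρ : ℝ) : 0 ≤ Qd P1 Q γ ρ := sq_nonneg _

variable {P1 P2 Q N1 N2 γ ρ β : ℝ}

lemma r1_le_Cfun (α : ℝ) (hP1 : 0 ≤ P1) (hγ : γ ≤ 1) (hβ : β ^ 2 ≤ 1) (hρ : ρ ≤ 1)
    (hn : 0 < γ * P1 + N1) :
    r1 P1 Q N1 γ ρ β α ≤ Cfun ((1 - β ^ 2) * (1 - ρ) * (1 - γ) * P1 / (γ * P1 + N1)) := by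
  have hs : 0 ≤ (1 - β ^ 2) * (1 - ρ) * (1 - γ) * P1 := by
    have := sub_nonneg.2 hβ; have := sub_nonneg.2 hρ; have := sub_nonneg.2 hγ
    positivity
  have hratio := half_logb_gdpc_ratio_le_Cfun α hs (Qd_nonneg P1 Q γ ρ) hn le_rfl
  rw [add_zero, add_zero] at hratio
  refine le_of_eq_of_le ?_ hratio
  rw [r1, Agdpc, Bgdpc]
  congr 3 <;> ring

lemma r2_le_Cfun (α : ℝ) (hP1 : 0 ≤ P1) (hP2 : 0 ≤ P2) (hγ : γ ≤ 1) (hβ0 : 0 ≤ β)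
    (hβ : β ^ 2 ≤ 1) (hρ0 : 0 ≤ ρ) (hρ : ρ ≤ 1) (hn : 0 < γ * P1 + N2) :
    r2 P1 P2 Q N2 γ ρ β α ≤ Cfun (((1 - γ) * P1 + P2 +
      2 * √((1 - (1 - β ^ 2) * (1 - ρ)) * (1 - γ) * P1 * P2)) / (γ * P1 + N2)) := by
  have hp : 0 ≤ (1 - γ) * P1 := mul_nonneg (sub_nonneg.2 hγ) hP1
  have hs' : 0 ≤ (1 - ρ) * (1 - γ) * P1 := by
    have := sub_nonneg.2 hρ
    positivity
  have hs : 0 ≤ (1 - β ^ 2) * ((1 - ρ) * (1 - γ) * P1) := mul_nonneg (sub_nonneg.2 hβ) hs'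
  have hE : 0 ≤ β ^ 2 * ((1 - ρ) * (1 - γ) * P1) + P2 +
      2 * β * √((1 - ρ) * (1 - γ) * P1 * P2) := by positivity
  have hratio := half_logb_gdpc_ratio_le_Cfun α hs (Qd_nonneg P1 Q γ ρ) hn hE
  have hpower : (1 - β ^ 2) * ((1 - ρ) * (1 - γ) * P1) + (β ^ 2 * ((1 - ρ) * (1 - γ) * P1) + P2 +
      2 * β * √((1 - ρ) * (1 - γ) * P1 * P2)) ≤
      (1 - γ) * P1 + P2 + 2 * √((1 - (1 - β ^ 2) * (1 - ρ)) * (1 - γ) * P1 * P2) := by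
    have := coherent_power_le hp hP2 hρ0 hβ0
    simp only [← mul_assoc] at this
    linarith
  refine le_of_eq_of_le ?_ (hratio.trans (Cfun_le_Cfun (by positivity) (by gcongr)))
  rw [r2, Cgdpc, Dgdpc]
  congr 3 <;> ring

lemma bddAbove_outerRate (hP1 : 0 ≤ P1) (hγ : γ ≤ 1) (hn : 0 < γ * P1 + N1) :
    BddAbove (outerRate P1 P2 N1 N2 γ '' Icc 0 1) := by
  refine ⟨Cfun ((1 - γ) * P1 / (γ * P1 + N1)), ?_⟩
  rintro _ ⟨β', ⟨hβ'0, hβ'1⟩, rfl⟩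
  have hp : 0 ≤ (1 - γ) * P1 := mul_nonneg (sub_nonneg.2 hγ) hP1
  refine (min_le_left _ _).trans (Cfun_le_Cfun (by positivity) ?_)
  rw [mul_assoc]
  exact div_le_div_of_nonneg_right (mul_le_of_le_one_left hp hβ'1) hn.le

theorem gdpc_rate_le_outer_bound_general
    (P1 P2 Q N1 N2 : ℝ) (hP1 : 0 < P1) (hP2 : 0 < P2)
    (hN1 : 0 < N1) (hN12 : N1 < N2)
    (γ β α ρ : ℝ) (hγ : γ ∈ Set.Icc (0 : ℝ) 1) (hβ : β ∈ Set.Icc (0 : ℝ) 1)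
    (hρ : ρ ∈ Set.Icc (0 : ℝ) 1) :
    min (r1 P1 Q N1 γ ρ β α) (r2 P1 P2 Q N2 γ ρ β α) ≤
      sSup ((fun β' => min (Cfun (β' * (1 - γ) * P1 / (γ * P1 + N1)))
        (Cfun (((1 - γ) * P1 + P2 + 2 * Real.sqrt ((1 - β') * (1 - γ) * P1 * P2)) /
          (γ * P1 + N2)))) '' Set.Icc (0 : ℝ) 1) := by
  obtain ⟨hγ0, hγ1⟩ := hγ
  obtain ⟨hβ0, hβ1⟩ := hβ
  obtain ⟨hρ0, hρ1⟩ := hρ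
  have hn1 : 0 < γ * P1 + N1 := by positivity
  have hn2 : 0 < γ * P1 + N2 := by
    have := hN1.trans hN12
    positivity
  have hβ2 : β ^ 2 ≤ 1 := pow_le_one₀ hβ0 hβ1
  have hβ' : (1 - β ^ 2) * (1 - ρ) ∈ Icc (0 : ℝ) 1 :=
    ⟨mul_nonneg (by linarith) (by linarith),
      mul_le_one₀ (sub_le_self _ (sq_nonneg β)) (by linarith) (by linarith)⟩
  change _ ≤ sSup (outerRate P1 P2 N1 N2 γ '' Icc 0 1)
  exact le_csSup_of_le (bddAbove_outerRate hP1.le hγ1 hn1) (mem_image_of_mem _ hβ')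
    (min_le_min (r1_le_Cfun α hP1.le hγ1 hβ2 hρ1 hn1)
      (r2_le_Cfun α hP1.le hP2.le hγ1 hβ0 hβ2 hρ0 hρ1 hn2))

/-- For every `P₁, P₂, Q > 0`, `0 < N₁ < N₂`, `γ, β, α ∈ [0,1]`
and `ρ ∈ [0,1]` with `ρ(1−γ)P₁ ≤ Q`, the generalized dirty paper coding rate
satisfies
`min { r₁(γ,ρ,β,α), r₂(γ,ρ,β,α) } ≤
 sup_{β'∈[0,1]} min { C(β'(1−γ)P₁/(γP₁+N₁)),
   C(((1−γ)P₁+P₂+2√((1−β')(1−γ)P₁P₂))/(γP₁+N₂)) }`. -/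
theorem gdpc_rate_le_outer_bound
    (P1 P2 Q N1 N2 : ℝ) (hP1 : 0 < P1) (hP2 : 0 < P2) (hQ : 0 < Q)
    (hN1 : 0 < N1) (hN12 : N1 < N2)
    (γ β α ρ : ℝ) (hγ : γ ∈ Set.Icc (0 : ℝ) 1) (hβ : β ∈ Set.Icc (0 : ℝ) 1)
    (hα : α ∈ Set.Icc (0 : ℝ) 1) (hρ : ρ ∈ Set.Icc (0 : ℝ) 1)
    (hρQ : ρ * (1 - γ) * P1 ≤ Q) :
    min (r1 P1 Q N1 γ ρ β α) (r2 P1 P2 Q N2 γ ρ β α) ≤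
      sSup ((fun β' => min (Cfun (β' * (1 - γ) * P1 / (γ * P1 + N1)))
        (Cfun (((1 - γ) * P1 + P2 + 2 * Real.sqrt ((1 - β') * (1 - γ) * P1 * P2)) /
          (γ * P1 + N2)))) '' Set.Icc (0 : ℝ) 1) :=
  gdpc_rate_le_outer_bound_general P1 P2 Q N1 N2 hP1 hP2 hN1 hN12 γ β α ρ hγ hβ hρ

end DAWGN
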